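/- Let X ↔ Y₁ ↔ ... ↔ Y_m be a Markov chain with K_i the common information of (X, Y_i). Then H(X|K₁) ≤ H(X|K₂) ≤ ... ≤ H(X|K_m). -/

import Mathlib

open Finset

variable {Ω α β γ κ : Type*}

/-- Probability of the event `X = a` under weight function `p` on a finite sample space. -/
noncomputable def pr [Fintype Ω] (p : Ω → ℝ) [DecidableEq α] (X : Ω → α) (a : α) : ℝ :=
  ∑ ω ∈ Finset.univ.filter (fun ω => X ω = a), p ω

/-- Shannon entropy of a random variable `X`. -/
noncomputable def ent [Fintype Ω] (p : Ω → ℝ) [Fintype α] [DecidableEq α] (X : Ω → α) : ℝ :=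
  ∑ a, Real.negMulLog (pr p X a)

/-- Conditional entropy `H(X|Y)`. -/
noncomputable def condEnt [Fintype Ω] (p : Ω → ℝ) [Fintype α] [DecidableEq α] [Fintype β]
    [DecidableEq β] (X : Ω → α) (Y : Ω → β) : ℝ :=
  ent p (fun ω => (X ω, Y ω)) - ent p Y

/-- Mutual information `I(X;Y)`. -/
noncomputable def mutInf [Fintype Ω] (p : Ω → ℝ) [Fintype α] [DecidableEq α] [Fintype β]
    [DecidableEq β] (X : Ω → α) (Y : Ω → β) : ℝ :=
  ent p X + ent p Y - ent p (fun ω => (X ω, Y ω))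

/-- Conditional mutual information `I(X;Y|K)`. -/
noncomputable def condMutInf [Fintype Ω] (p : Ω → ℝ) [Fintype α] [DecidableEq α] [Fintype β]
    [DecidableEq β] [Fintype κ] [DecidableEq κ] (X : Ω → α) (Y : Ω → β) (K : Ω → κ) : ℝ :=
  condEnt p X K + condEnt p Y K - condEnt p (fun ω => (X ω, Y ω)) K

/-- `p` is a probability mass function on the finite sample space `Ω`. -/
def IsPMF [Fintype Ω] (p : Ω → ℝ) : Prop := (∀ ω, 0 ≤ p ω) ∧ ∑ ω, p ω = 1

/-- `X` and `Y` are conditionally independent given `K`. -/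
def CondIndep [Fintype Ω] (p : Ω → ℝ) [DecidableEq α] [DecidableEq β] [DecidableEq κ]
    (X : Ω → α) (Y : Ω → β) (K : Ω → κ) : Prop :=
  ∀ x y k, pr p (fun ω => (X ω, Y ω, K ω)) (x, y, k) * pr p K k =
    pr p (fun ω => (X ω, K ω)) (x, k) * pr p (fun ω => (Y ω, K ω)) (y, k)

/-- Connectivity of `x` and `x'` in the bipartite graph of the joint pmf `q`
(an edge joins `a` and `b` iff `q (a,b) > 0`). -/
def Conn (q : α × β → ℝ) : α → α → Prop :=
  Relation.ReflTransGen (fun x x' => ∃ y, 0 < q (x, y) ∧ 0 < q (x', y))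

/-- The connected component of `x` in the bipartite graph of `q`, as a finite set. -/
noncomputable def comp [Fintype α] (q : α × β → ℝ) (x : α) : Finset α :=
  open Classical in Finset.univ.filter (fun x' => Conn q x x')


/-- The joint pmf of the pair `(X, Y)` under `p`. -/
noncomputable def jointPMF [Fintype Ω] (p : Ω → ℝ) [DecidableEq α] [DecidableEq β]
    (X : Ω → α) (Y : Ω → β) : α × β → ℝ :=
  fun ab => pr p (fun ω => (X ω, Y ω)) ab


lemma pr_eq_sum_ite [Fintype Ω] (p : Ω → ℝ) [DecidableEq α] (X : Ω → α) (a : α) :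
    pr p X a = ∑ ω, if X ω = a then p ω else 0 := by
  rw [pr, Finset.sum_filter]

lemma pr_nonneg [Fintype Ω] {p : Ω → ℝ} (hp : ∀ ω, 0 ≤ p ω) [DecidableEq α] (X : Ω → α)
    (a : α) : 0 ≤ pr p X a :=
  Finset.sum_nonneg fun ω _ => hp ω

lemma marginal_fst [Fintype Ω] (p : Ω → ℝ) [Fintype κ] [DecidableEq κ] [DecidableEq κ']
    (K : Ω → κ) (K' : Ω → κ') (k' : κ') :
    ∑ k, pr p (fun ω => (K ω, K' ω)) (k, k') = pr p K' k' := by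
  simp only [pr_eq_sum_ite, Prod.mk.injEq]
  rw [Finset.sum_comm]
  refine Finset.sum_congr rfl fun ω _ => ?_
  by_cases h : K' ω = k' <;> simp [h]

lemma sum_negMulLog_ge {ι : Type*} {s : Finset ι} {f : ι → ℝ} (hf : ∀ a ∈ s, 0 ≤ f a) :
    Real.negMulLog (∑ a ∈ s, f a) ≤ ∑ a ∈ s, Real.negMulLog (f a) := by
  have hS : Real.negMulLog (∑ a ∈ s, f a) = ∑ a ∈ s, -(f a) * Real.log (∑ b ∈ s, f b) := by
    rw [Real.negMulLog, ← Finset.sum_mul, ← Finset.sum_neg_distrib]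
  rw [hS]
  refine Finset.sum_le_sum fun a ha => ?_
  rw [Real.negMulLog, neg_mul, neg_mul, neg_le_neg_iff]
  rcases eq_or_lt_of_le (hf a ha) with h | h
  · simp [← h]
  · exact mul_le_mul_of_nonneg_left
      (Real.log_le_log h (Finset.single_le_sum hf ha)) (le_of_lt h)
lemma pr_pair_comp [Fintype Ω] (p : Ω → ℝ) [DecidableEq α] [DecidableEq κ]
    (X : Ω → α) (g : α → κ) (a : α) (c : κ) :
    pr p (fun ω => (X ω, g (X ω))) (a, c) = if c = g a then pr p X a else 0 := by
  simp only [pr_eq_sum_ite, Prod.mk.injEq]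
  by_cases h : c = g a
  · subst h
    rw [if_pos rfl]
    refine Finset.sum_congr rfl fun ω _ => ?_
    by_cases hx : X ω = a <;> simp [hx]
  · rw [if_neg h]
    refine Finset.sum_eq_zero fun ω _ => ?_
    rw [if_neg]
    rintro ⟨h1, h2⟩
    exact h (h1 ▸ h2.symm)

lemma ent_pair_comp [Fintype Ω] (p : Ω → ℝ) [Fintype α] [DecidableEq α]
    [Fintype κ] [DecidableEq κ] (X : Ω → α) (g : α → κ) :
    ent p (fun ω => (X ω, g (X ω))) = ent p X := by
  rw [ent, ent, Fintype.sum_prod_type]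
  refine Finset.sum_congr rfl fun a _ => ?_
  simp [pr_pair_comp, apply_ite Real.negMulLog, Real.negMulLog_zero]

lemma ent_snd_le [Fintype Ω] {p : Ω → ℝ} (hp : ∀ ω, 0 ≤ p ω) [Fintype κ] [DecidableEq κ]
    [Fintype κ'] [DecidableEq κ'] (K : Ω → κ) (K' : Ω → κ') :
    ent p K' ≤ ent p (fun ω => (K ω, K' ω)) := by
  rw [ent, ent, Fintype.sum_prod_type, Finset.sum_comm]
  refine Finset.sum_le_sum fun k' _ => ?_
  rw [← marginal_fst p K K' k']
  exact sum_negMulLog_ge fun k _ => pr_nonneg hp _ _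

lemma ent_comp_le [Fintype Ω] {p : Ω → ℝ} (hp : ∀ ω, 0 ≤ p ω) [Fintype κ] [DecidableEq κ]
    [Fintype κ'] [DecidableEq κ'] (K : Ω → κ) (f : κ → κ') :
    ent p (fun ω => f (K ω)) ≤ ent p K :=
  (ent_snd_le hp K (fun ω => f (K ω))).trans (le_of_eq (ent_pair_comp p K f))

lemma condEnt_comp [Fintype Ω] (p : Ω → ℝ) [Fintype α] [DecidableEq α]
    [Fintype κ] [DecidableEq κ] (X : Ω → α) (g : α → κ) :
    condEnt p X (fun ω => g (X ω)) = ent p X - ent p (fun ω => g (X ω)) := by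
  rw [condEnt, ent_pair_comp]
lemma conn_symm (q : α × β → ℝ) : Symmetric (Conn q) :=
  have : Std.Symm (fun x x' => ∃ y, 0 < q (x, y) ∧ 0 < q (x', y)) :=
    ⟨fun a b ⟨y, h1, h2⟩ => ⟨y, h2, h1⟩⟩
  fun x y h => Std.Symm.symm (r := Relation.ReflTransGen (fun x x' => ∃ y, 0 < q (x, y) ∧ 0 < q (x', y))) x y h

lemma mem_comp_iff [Fintype α] (q : α × β → ℝ) (x x' : α) :
    x' ∈ comp q x ↔ Conn q x x' := by
  classical
  simp [comp]

lemma comp_eq_of_conn [Fintype α] (q : α × β → ℝ) {x x' : α} (h : Conn q x x') :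
    comp q x = comp q x' := by
  ext x''
  rw [mem_comp_iff, mem_comp_iff]
  exact ⟨fun h' => (conn_symm q h).trans h', fun h' => h.trans h'⟩

lemma conn_of_comp_eq [Fintype α] (q : α × β → ℝ) {x x' : α} (h : comp q x = comp q x') :
    Conn q x x' := by
  have : x' ∈ comp q x := h ▸ (mem_comp_iff q x' x').2 Relation.ReflTransGen.refl
  exact (mem_comp_iff q x x').1 this

lemma pr_le_pr [Fintype Ω] {p : Ω → ℝ} (hp : ∀ ω, 0 ≤ p ω) [DecidableEq α] [DecidableEq κ]
    {A : Ω → α} {B : Ω → κ} {a : α} {b : κ} (h : ∀ ω, A ω = a → B ω = b) :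
    pr p A a ≤ pr p B b := by
  refine Finset.sum_le_sum_of_subset_of_nonneg ?_ fun ω _ _ => hp ω
  intro ω hω
  simp only [Finset.mem_filter, Finset.mem_univ, true_and] at hω ⊢
  exact h ω hω

lemma exists_pos_of_sum_pos {ι : Type*} {s : Finset ι} {f : ι → ℝ}
    (h : 0 < ∑ a ∈ s, f a) : ∃ a ∈ s, 0 < f a := by
  by_contra hc
  push_neg at hc
  exact absurd (Finset.sum_nonpos hc) (not_le.2 h)

lemma conn_step [Fintype Ω] {p : Ω → ℝ} (hp : IsPMF p) [Fintype α] [DecidableEq α]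
    [DecidableEq β] [Fintype β]
    (X : Ω → α) (Yi Z : Ω → β) (hci : CondIndep p X Z Yi) {x x' : α}
    (h : Conn (jointPMF p X Yi) x x') : Conn (jointPMF p X Z) x x' := by
  unfold Conn at h ⊢
  refine Relation.ReflTransGen.mono ?_ x x' h
  rintro a b ⟨y, h1, h2⟩
  have hy : 0 < pr p Yi y :=
    lt_of_lt_of_le h1 (pr_le_pr hp.1 (fun ω hω => by
      simp only [Prod.mk.injEq] at hω; exact hω.2))
  have hsum : 0 < ∑ z, pr p (fun ω => (Z ω, Yi ω)) (z, y) := by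
    rw [marginal_fst p Z Yi y]; exact hy
  obtain ⟨z, -, hz⟩ := exists_pos_of_sum_pos hsum
  have key : ∀ c : α, 0 < jointPMF p X Yi (c, y) → 0 < jointPMF p X Z (c, z) := by
    intro c hc
    have hcindep := hci c z y
    have htriple : 0 < pr p (fun ω => (X ω, Z ω, Yi ω)) (c, z, y) := by
      by_contra hle
      push_neg at hle
      have h0 : pr p (fun ω => (X ω, Z ω, Yi ω)) (c, z, y) = 0 :=
        le_antisymm hle (pr_nonneg hp.1 _ _)
      rw [h0, zero_mul] at hcindep
      have : 0 < pr p (fun ω => (X ω, Yi ω)) (c, y) * pr p (fun ω => (Z ω, Yi ω)) (z, y) :=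
        mul_pos hc hz
      rw [← hcindep] at this
      exact lt_irrefl 0 this
    refine lt_of_lt_of_le htriple (pr_le_pr hp.1 fun ω hω => ?_)
    simp only [Prod.mk.injEq] at hω ⊢
    exact ⟨hω.1, hω.2.1⟩
  exact ⟨z, key a h1, key b h2⟩
/-- For a Markov chain `X ↔ Y₁ ↔ … ↔ Y_m` with `K_i` the Gács–Körner common information
of `(X, Y_i)`, the conditional entropies are monotone: `H(X|K_i) ≤ H(X|K_j)` for `i ≤ j`.
(Here `Y i` for `i = 0, …, m-1` plays the role of `Y_{i+1}`.) -/
theorem stmt11 [Fintype Ω] [Fintype α] [DecidableEq α] [Fintype β] [DecidableEq β]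
    (p : Ω → ℝ) (hp : IsPMF p) (m : ℕ)
    (X : Ω → α) (Y : ℕ → Ω → β)
    (hmarkov : ∀ i, i + 1 < m → CondIndep p X (Y (i + 1)) (Y i)) :
    ∀ i j, i ≤ j → j < m →
      condEnt p X (fun ω => comp (jointPMF p X (Y i)) (X ω))
        ≤ condEnt p X (fun ω => comp (jointPMF p X (Y j)) (X ω)) := by
  classical
  intro i j hij hjm
  have hconn : ∀ j, i ≤ j → j < m → ∀ x x',
      Conn (jointPMF p X (Y i)) x x' → Conn (jointPMF p X (Y j)) x x' := by
    intro j
    induction j with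
    | zero =>
      intro h0 _ x x' h
      obtain rfl := Nat.le_zero.mp h0
      exact h
    | succ n ih =>
      intro hle hm x x' h
      rcases Nat.lt_or_ge i (n + 1) with hlt | hge
      · exact conn_step hp X (Y n) (Y (n + 1)) (hmarkov n hm)
          (ih (Nat.lt_succ_iff.mp hlt) (Nat.lt_of_succ_lt hm) x x' h)
      · obtain rfl := le_antisymm hle hge
        exact h
  have hconn' := hconn j hij hjm
  set qi := jointPMF p X (Y i) with hqi
  set qj := jointPMF p X (Y j) with hqj
  set f : Finset α → Finset α := fun s =>
    if h : ∃ x, comp qi x = s then comp qj h.choose else ∅ with hf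
  have hfac : ∀ x, comp qj x = f (comp qi x) := by
    intro x
    have hex : ∃ x', comp qi x' = comp qi x := ⟨x, rfl⟩
    rw [hf]
    simp only [dif_pos hex]
    have hch : comp qi hex.choose = comp qi x := hex.choose_spec
    have : Conn qj hex.choose x := hconn' _ _ (conn_of_comp_eq qi hch)
    exact (comp_eq_of_conn qj this).symm
  rw [condEnt_comp p X (fun x => comp qi x), condEnt_comp p X (fun x => comp qj x)]
  have hrw : (fun ω => comp qj (X ω)) = fun ω => f (comp qi (X ω)) := by
    funext ω; exact hfac (X ω)
  rw [hrw]
  exact sub_le_sub_left (ent_comp_le hp.1 (fun ω => comp qi (X ω)) f) _
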